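/- arXiv:1606.06414 — 2 statements merged into one kernel-verified Lean document; each statement's English description precedes it below -/
import Mathlib

section
/- Let t_k > 0 satisfy 1 ≥ (β₁−τ)·K·exp[α₀ t_k² (4 log k / A)² − (4−a) log k − 2 log t_k] for all k ∈ N, where β₁ − τ, K, α₀, A > 0 and 0 ≤ a < 4. Then the sequence {t_k} is bounded. -/
open Real Filter

/-!
Write `b = 16 α₀ / A²` and `L = log k ≥ log 2`, so that the hypothesis reads
`b t² L² - (4 - a) L - 2 log t ≤ -log ((β₁ - τ) K)`. Once `b t² log 2 ≥ 8`, the linear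
term `(4 - a) L` is absorbed by half of the quadratic one, and the left side is at least
`(b (log 2)² / 2) t² - 2 log t`; since `2 log t` grows slower than any multiple of `t²`,
this bounds `t`.
-/

lemma le_neg_log_of_mul_exp_le_one {C y : ℝ} (hC : 0 < C) (h : C * exp y ≤ 1) :
    y ≤ -log C := by
  rw [← log_inv, le_log_iff_exp_le (inv_pos.2 hC), ← one_div, le_div_iff₀' hC]
  exact h

lemma sq_le_of_mul_sq_le_add_two_mul_log {c x D : ℝ} (hc : 0 < c) (hx : 0 < x)
    (h : c * x ^ 2 ≤ D + 2 * log x) : x ^ 2 ≤ 2 * (D - 1 - log (c / 2)) / c := by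
  -- `log y ≤ y - 1` at `y = c x² / 2`
  have hlog := log_le_sub_one_of_pos (show 0 < c / 2 * x ^ 2 by positivity)
  rw [log_mul (by positivity) (by positivity), log_pow, Nat.cast_ofNat] at hlog
  rw [le_div_iff₀ hc]
  linarith

lemma le_quadratic_sub_linear_of_eight_le {b ℓ L a x : ℝ} (hb : 0 < b) (hℓ : 0 < ℓ)
    (hL : ℓ ≤ L) (ha : 0 ≤ a) (hx : 8 ≤ b * ℓ * x ^ 2) :
    b * ℓ ^ 2 / 2 * x ^ 2 ≤ b * x ^ 2 * L ^ 2 - (4 - a) * L := by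
  have hbx : 0 ≤ b * x ^ 2 := by positivity
  have hlin : (4 - a) * L ≤ b * x ^ 2 * L ^ 2 / 2 := by
    nlinarith [mul_le_mul_of_nonneg_left hL hbx]
  nlinarith [mul_le_mul hL hL hℓ.le (hℓ.trans_le hL).le]

lemma exists_bound_of_quadratic_log_le {b ℓ a D : ℝ} (hb : 0 < b) (hℓ : 0 < ℓ)
    (ha : 0 ≤ a) :
    ∃ M, ∀ x L, 0 < x → ℓ ≤ L →
      b * x ^ 2 * L ^ 2 - (4 - a) * L - 2 * log x ≤ D → x ≤ M := by
  refine ⟨√(max (8 / (b * ℓ)) (2 * (D - 1 - log (b * ℓ ^ 2 / 2 / 2)) / (b * ℓ ^ 2 / 2))),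
    fun x L hx hL h => le_sqrt_of_sq_le ?_⟩
  rcases le_or_gt 8 (b * ℓ * x ^ 2) with hlarge | hsmall
  · refine le_max_of_le_right (sq_le_of_mul_sq_le_add_two_mul_log (by positivity) hx ?_)
    linarith [le_quadratic_sub_linear_of_eight_le hb hℓ hL ha hlarge]
  · refine le_max_of_le_left ((le_div_iff₀ (by positivity)).2 ?_)
    linarith

theorem tk_bounded_general (β₁ τ K α₀ A a : ℝ) (hβτ : τ < β₁) (hK : 0 < K)
    (hα₀ : 0 < α₀) (hA : 0 < A) (ha0 : 0 ≤ a)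
    (t : ℕ → ℝ) (ht : ∀ k : ℕ, 0 < t k)
    (hineq : ∀ k : ℕ, 2 ≤ k →
      (β₁ - τ) * K *
        exp (α₀ * (t k) ^ 2 * (4 * log k / A) ^ 2 - (4 - a) * log k - 2 * log (t k)) ≤ 1) :
    ∃ M : ℝ, ∀ k : ℕ, t k ≤ M := by
  have hC : 0 < (β₁ - τ) * K := mul_pos (sub_pos.2 hβτ) hK
  obtain ⟨M, hM⟩ := exists_bound_of_quadratic_log_le (b := 16 * α₀ / A ^ 2)
    (D := -log ((β₁ - τ) * K)) (by positivity) (log_pos one_lt_two) ha0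
  have htail : ∀ k ≥ 2, t k ≤ M := by
    intro k hk
    have hexp := le_neg_log_of_mul_exp_le_one hC (hineq k hk)
    have hquad :
        α₀ * t k ^ 2 * (4 * log k / A) ^ 2 = 16 * α₀ / A ^ 2 * t k ^ 2 * log k ^ 2 := by
      field_simp
      ring
    rw [hquad] at hexp
    exact hM (t k) (log k) (ht k) (log_le_log two_pos (by exact_mod_cast hk)) hexp
  obtain ⟨B, hB⟩ :=
    (isBoundedUnder_of_eventually_le (eventually_atTop.2 ⟨2, htail⟩)).bddAbove_range
  exact ⟨B, fun k => hB ⟨k, rfl⟩⟩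

/-- If `t_k > 0` satisfies, for all `k ≥ 2`,
`1 ≥ (β₁-τ) K exp(α₀ t_k² (4 log k / A)² - (4-a) log k - 2 log t_k)`,
with `β₁ > τ > 0`, `K > 0`, `α₀ > 0`, `A > 0`, `0 ≤ a < 4`, then `{t_k}` is bounded. -/
theorem tk_bounded (β₁ τ K α₀ A a : ℝ) (hτ : 0 < τ) (hβτ : τ < β₁) (hK : 0 < K)
    (hα₀ : 0 < α₀) (hA : 0 < A) (ha0 : 0 ≤ a) (ha4 : a < 4)
    (t : ℕ → ℝ) (ht : ∀ k : ℕ, 0 < t k)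
    (hineq : ∀ k : ℕ, 2 ≤ k →
      (β₁ - τ) * K *
        exp (α₀ * (t k) ^ 2 * (4 * log k / A) ^ 2 - (4 - a) * log k - 2 * log (t k)) ≤ 1) :
    ∃ M : ℝ, ∀ k : ℕ, t k ≤ M :=
  tk_bounded_general β₁ τ K α₀ A a hβτ hK hα₀ hA ha0 t ht hineq
end

section
/- (Converse of Vitali's theorem) Let (X, F, μ) be a finite measure space and f_n ∈ L¹(X, μ) such that lim_{n→∞} ∫_E f_n dμ exists for every E ∈ F. Then {f_n} is uniformly integrable. -/
/-!
Measurable sets modulo null sets form a complete metric space for `d(s, t) = μ (s ∆ t)`, and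
each `s ↦ ∫_s f_n` is continuous on it. These functions converge pointwise, so by Baire category
there are `k`, `s₀` and `r > 0` with `|∫_s f_m - ∫_s f_n| ≤ ε` for all `m, n ≥ k` whenever
`μ (s ∆ s₀) < r`. Writing a small set `s` as `(s₀ ∪ s) \ (s₀ \ s)` spreads this to every `s` with
`μ s < r`, and absolute continuity of `f_0, …, f_k` handles the first terms: `∫_s f_n` is small
uniformly in `n` on small sets. Splitting `s` according to the sign of `f_n` bounds `∫_s |f_n|`.
-/

open MeasureTheory Filter Set
open scoped symmDiff ENNReal

theorem BaireSpace.exists_isOpen_forall_dist_le_of_cauchySeq {Y Z : Type*} [TopologicalSpace Y]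
    [BaireSpace Y] [Nonempty Y] [PseudoMetricSpace Z] {F : ℕ → Y → Z}
    (hF : ∀ n, Continuous (F n)) (hcauchy : ∀ y, CauchySeq fun n => F n y) {ε : ℝ}
    (hε : 0 < ε) :
    ∃ k, ∃ U : Set Y, IsOpen U ∧ U.Nonempty ∧
      ∀ y ∈ U, ∀ m ≥ k, ∀ n ≥ k, dist (F m y) (F n y) ≤ ε := by
  set T : ℕ → Set Y := fun k => {y | ∀ m ≥ k, ∀ n ≥ k, dist (F m y) (F n y) ≤ ε}
  have hT : ∀ k, IsClosed (T k) := fun k => by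
    simp only [T, ofPred_forall]
    exact isClosed_iInter fun m => isClosed_iInter fun _ => isClosed_iInter fun n =>
      isClosed_iInter fun _ => isClosed_le ((hF m).dist (hF n)) continuous_const
  have hcover : ⋃ k, T k = univ := eq_univ_of_forall fun y => by
    obtain ⟨k, hk⟩ := Metric.cauchySeq_iff.1 (hcauchy y) ε hε
    exact mem_iUnion.2 ⟨k, fun m hm n hn => (hk m hm n hn).le⟩
  obtain ⟨k, hk⟩ := nonempty_interior_of_iUnion_of_closed hT hcover
  exact ⟨k, interior (T k), isOpen_interior, hk, fun y hy => interior_subset hy⟩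

namespace MeasureTheory

variable {X : Type*} [MeasurableSpace X] {μ : Measure X}

section

variable {f : X → ℝ}

theorem Integrable.exists_pos_forall_setIntegral_abs_le (hf : Integrable f μ) {ε : ℝ}
    (hε : 0 < ε) :
    ∃ δ > 0, ∀ s, MeasurableSet s → μ s ≤ ENNReal.ofReal δ → ∫ x in s, |f x| ∂μ ≤ ε := by
  obtain ⟨δ, hδ, hsmall⟩ :=
    (memLp_one_iff_integrable.2 hf).eLpNorm_indicator_le le_rfl ENNReal.one_ne_top hε
  refine ⟨δ, hδ, fun s hs hμs => ?_⟩
  have := hsmall s hs hμs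
  rw [eLpNorm_indicator_eq_eLpNorm_restrict hs, eLpNorm_one_eq_lintegral_enorm,
    ← ofReal_integral_norm_eq_lintegral_enorm hf.integrableOn,
    ENNReal.ofReal_le_ofReal_iff hε.le] at this
  simpa only [Real.norm_eq_abs] using this

theorem abs_setIntegral_sub_setIntegral_le (hf : Integrable f μ) {s t : Set X}
    (hs : MeasurableSet s) (ht : MeasurableSet t) :
    |∫ x in s, f x ∂μ - ∫ x in t, f x ∂μ| ≤ ∫ x in s ∆ t, |f x| ∂μ := by
  rw [← integral_inter_add_sdiff ht hf.integrableOn,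
    ← integral_inter_add_sdiff hs (s := t) hf.integrableOn, inter_comm t s,
    Set.symmDiff_def, setIntegral_union disjoint_sdiff_sdiff (ht.diff hs) hf.abs.integrableOn
      hf.abs.integrableOn]
  calc |∫ x in s ∩ t, f x ∂μ + ∫ x in s \ t, f x ∂μ
        - (∫ x in s ∩ t, f x ∂μ + ∫ x in t \ s, f x ∂μ)|
      = |∫ x in s \ t, f x ∂μ - ∫ x in t \ s, f x ∂μ| := by ring_nf
    _ ≤ |∫ x in s \ t, f x ∂μ| + |∫ x in t \ s, f x ∂μ| := abs_sub _ _
    _ ≤ _ := add_le_add abs_integral_le_integral_abs abs_integral_le_integral_abs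

theorem setIntegral_abs_le_two_mul_of_forall_subset (hf : Integrable f μ) {s : Set X}
    (hs : MeasurableSet s) {c : ℝ}
    (h : ∀ t ⊆ s, MeasurableSet t → |∫ x in t, f x ∂μ| ≤ c) :
    ∫ x in s, |f x| ∂μ ≤ 2 * c := by
  set φ := hf.1.mk f
  have hφ : StronglyMeasurable φ := hf.1.stronglyMeasurable_mk
  have hfφ : f =ᵐ[μ] φ := hf.1.ae_eq_mk
  have hpiece : ∀ t, MeasurableSet t → |∫ x in t, φ x ∂μ.restrict s| ≤ c := fun t ht => by
    rw [Measure.restrict_restrict ht, ← integral_congr_ae (ae_restrict_of_ae hfφ)]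
    exact h _ inter_subset_right (ht.inter hs)
  have hpos := abs_le.1 <| hpiece {x | 0 ≤ φ x} (stronglyMeasurable_const.measurableSet_le hφ)
  have hneg := abs_le.1 <| hpiece {x | φ x ≤ 0} (hφ.measurableSet_le stronglyMeasurable_const)
  calc ∫ x in s, |f x| ∂μ = ∫ x in s, ‖φ x‖ ∂μ :=
        integral_congr_ae (ae_restrict_of_ae (hfφ.mono fun x hx => by simp [hx]))
    _ = ∫ x in {x | 0 ≤ φ x}, φ x ∂μ.restrict s - ∫ x in {x | φ x ≤ 0}, φ x ∂μ.restrict s :=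
        integral_norm_eq_pos_sub_neg (hf.congr hfφ).restrict
    _ ≤ 2 * c := by linarith

theorem abs_setIntegral_le_two_mul_of_forall_symmDiff_lt [IsFiniteMeasure μ]
    (hf : Integrable f μ) {s₀ : Set X} (hs₀ : MeasurableSet s₀) {r c : ℝ}
    (h : ∀ t, MeasurableSet t → μ.real (t ∆ s₀) < r → |∫ x in t, f x ∂μ| ≤ c) {s : Set X}
    (hs : MeasurableSet s) (hμs : μ.real s < r) :
    |∫ x in s, f x ∂μ| ≤ 2 * c := by
  have hsplit : ∫ x in s, f x ∂μ = ∫ x in s₀ ∪ s, f x ∂μ - ∫ x in s₀ \ s, f x ∂μ := by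
    rw [← union_sdiff_right, setIntegral_sdiff hs hf.integrableOn subset_union_right]
    ring
  have hclose : ∀ t, MeasurableSet t → t ∆ s₀ ⊆ s → |∫ x in t, f x ∂μ| ≤ c :=
    fun t ht hts => h t ht ((measureReal_mono hts).trans_lt hμs)
  have hunion := hclose _ (hs₀.union hs) fun x => by simp only [mem_symmDiff, mem_union]; tauto
  have hdiff := hclose _ (hs₀.diff hs) fun x => by
    simp only [mem_symmDiff, Set.mem_sdiff]; tauto
  rw [hsplit]
  linarith [abs_sub (∫ x in s₀ ∪ s, f x ∂μ) (∫ x in s₀ \ s, f x ∂μ)]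

end

theorem Lp.isClosed_setOf_ae_mem {E : Type*} [NormedAddCommGroup E] {p : ℝ≥0∞} [Fact (1 ≤ p)]
    {C : Set E} (hC : IsClosed C) :
    IsClosed {g : Lp E p μ | ∀ᵐ x ∂μ, g x ∈ C} := by
  refine IsSeqClosed.isClosed fun g g' hg hlim => ?_
  obtain ⟨ns, -, hae⟩ := (tendstoInMeasure_of_tendsto_Lp hlim).exists_seq_tendsto_ae
  filter_upwards [ae_all_iff.2 fun i => hg (ns i), hae] with x hx hxlim
  exact hC.mem_of_tendsto hxlim (Eventually.of_forall hx)

/-- The measurable sets modulo null sets, realised as their indicators in `L¹`. -/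
def indicatorsL1 (μ : Measure X) : Set (Lp ℝ 1 μ) :=
  {g | ∀ᵐ x ∂μ, g x ∈ ({0, 1} : Set ℝ)}

theorem isClosed_indicatorsL1 : IsClosed (indicatorsL1 μ) :=
  Lp.isClosed_setOf_ae_mem (toFinite _).isClosed

theorem indicatorConstLp_mem_indicatorsL1 {s : Set X} (hs : MeasurableSet s) (hμs : μ s ≠ ∞) :
    indicatorConstLp 1 hs hμs (1 : ℝ) ∈ indicatorsL1 μ := by
  filter_upwards [indicatorConstLp_coeFn (p := 1) (hs := hs) (hμs := hμs) (c := (1 : ℝ))]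
    with x hx
  by_cases hxs : x ∈ s <;> simp [hx, hxs]

variable [IsFiniteMeasure μ]

theorem exists_eq_indicatorConstLp_of_mem_indicatorsL1 {g : Lp ℝ 1 μ}
    (hg : g ∈ indicatorsL1 μ) :
    ∃ s, ∃ hs : MeasurableSet s, g = indicatorConstLp 1 hs (measure_ne_top μ s) 1 := by
  have hs : MeasurableSet (g ⁻¹' {1}) :=
    (Lp.stronglyMeasurable g).measurable (measurableSet_singleton 1)
  refine ⟨_, hs, Lp.ext ?_⟩
  filter_upwards [hg, indicatorConstLp_coeFn (p := 1) (hs := hs) (hμs := measure_ne_top μ _)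
    (c := (1 : ℝ))] with x hx hx'
  rw [hx']
  rcases hx with h | h <;> simp_all

theorem dist_indicatorConstLp_one {s t : Set X} (hs : MeasurableSet s) (ht : MeasurableSet t) :
    dist (indicatorConstLp 1 hs (measure_ne_top μ s) (1 : ℝ))
      (indicatorConstLp 1 ht (measure_ne_top μ t) 1) = μ.real (s ∆ t) := by
  rw [dist_indicatorConstLp_eq_norm, norm_indicatorConstLp one_ne_zero ENNReal.one_ne_top]
  simp

theorem integral_indicatorConstLp_one_mul {s : Set X} (hs : MeasurableSet s) (f : X → ℝ) :
    ∫ x, indicatorConstLp 1 hs (measure_ne_top μ s) (1 : ℝ) x * f x ∂μ = ∫ x in s, f x ∂μ := by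
  rw [← integral_indicator hs]
  refine integral_congr_ae ?_
  filter_upwards [indicatorConstLp_coeFn (p := 1) (hs := hs) (hμs := measure_ne_top μ s)
    (c := (1 : ℝ))] with x hx
  by_cases hxs : x ∈ s <;> simp [hx, hxs]

theorem continuousOn_integral_mul_indicatorsL1 {f : X → ℝ} (hf : Integrable f μ) :
    ContinuousOn (fun g : Lp ℝ 1 μ => ∫ x, g x * f x ∂μ) (indicatorsL1 μ) := by
  refine Metric.continuousOn_iff.2 fun g hg ε hε => ?_
  obtain ⟨δ, hδ, hsmall⟩ := hf.exists_pos_forall_setIntegral_abs_le (half_pos hε)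
  refine ⟨δ, hδ, fun g' hg' hdist => ?_⟩
  obtain ⟨t, ht, rfl⟩ := exists_eq_indicatorConstLp_of_mem_indicatorsL1 hg
  obtain ⟨s, hs, rfl⟩ := exists_eq_indicatorConstLp_of_mem_indicatorsL1 hg'
  rw [dist_indicatorConstLp_one] at hdist
  rw [integral_indicatorConstLp_one_mul, integral_indicatorConstLp_one_mul, Real.dist_eq]
  calc |∫ x in s, f x ∂μ - ∫ x in t, f x ∂μ| ≤ ∫ x in s ∆ t, |f x| ∂μ :=
        abs_setIntegral_sub_setIntegral_le hf hs ht
    _ ≤ ε / 2 := hsmall _ (hs.symmDiff ht)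
        ((ENNReal.le_ofReal_iff_toReal_le (measure_ne_top μ _) hδ.le).2 hdist.le)
    _ < ε := half_lt_self hε

variable {fs : ℕ → X → ℝ}

theorem exists_ball_forall_abs_setIntegral_sub_le_of_cauchySeq (hint : ∀ n, Integrable (fs n) μ)
    (hcauchy : ∀ s, MeasurableSet s → CauchySeq fun n => ∫ x in s, fs n x ∂μ) {ε : ℝ}
    (hε : 0 < ε) :
    ∃ k, ∃ s₀, MeasurableSet s₀ ∧ ∃ r > 0, ∀ s, MeasurableSet s → μ.real (s ∆ s₀) < r →
      ∀ m ≥ k, ∀ n ≥ k, |∫ x in s, fs m x ∂μ - ∫ x in s, fs n x ∂μ| ≤ ε := by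
  have : CompleteSpace (indicatorsL1 μ) := isClosed_indicatorsL1.completeSpace_coe
  have : Nonempty (indicatorsL1 μ) :=
    ⟨⟨_, indicatorConstLp_mem_indicatorsL1 MeasurableSet.empty (measure_ne_top μ ∅)⟩⟩
  set F : ℕ → indicatorsL1 μ → ℝ := fun n g => ∫ x, (g : Lp ℝ 1 μ) x * fs n x ∂μ
  have hF : ∀ n, Continuous (F n) := fun n =>
    (continuousOn_integral_mul_indicatorsL1 (hint n)).domRestrict
  have hFcauchy : ∀ g, CauchySeq fun n => F n g := by
    rintro ⟨g, hg⟩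
    obtain ⟨s, hs, rfl⟩ := exists_eq_indicatorConstLp_of_mem_indicatorsL1 hg
    simpa only [F, integral_indicatorConstLp_one_mul] using hcauchy s hs
  obtain ⟨k, U, hU, ⟨g₀, hg₀⟩, hFU⟩ :=
    BaireSpace.exists_isOpen_forall_dist_le_of_cauchySeq hF hFcauchy hε
  obtain ⟨r, hr, hball⟩ := Metric.isOpen_iff.1 hU g₀ hg₀
  obtain ⟨s₀, hs₀, hg₀s₀⟩ := exists_eq_indicatorConstLp_of_mem_indicatorsL1 g₀.2
  refine ⟨k, s₀, hs₀, r, hr, fun s hs hsr m hm n hn => ?_⟩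
  have hmem : (⟨_, indicatorConstLp_mem_indicatorsL1 hs (measure_ne_top μ s)⟩ :
      indicatorsL1 μ) ∈ Metric.ball g₀ r := by
    rwa [Metric.mem_ball, Subtype.dist_eq, hg₀s₀, dist_indicatorConstLp_one]
  simpa only [F, integral_indicatorConstLp_one_mul, Real.dist_eq] using
    hFU _ (hball hmem) m hm n hn

theorem exists_pos_forall_abs_setIntegral_le_of_cauchySeq (hint : ∀ n, Integrable (fs n) μ)
    (hcauchy : ∀ s, MeasurableSet s → CauchySeq fun n => ∫ x in s, fs n x ∂μ) {ε : ℝ}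
    (hε : 0 < ε) :
    ∃ δ > 0, ∀ s, MeasurableSet s → μ s ≤ ENNReal.ofReal δ → ∀ n, |∫ x in s, fs n x ∂μ| ≤ ε := by
  obtain ⟨k, s₀, hs₀, r, hr, hnear⟩ :=
    exists_ball_forall_abs_setIntegral_sub_le_of_cauchySeq hint hcauchy
      (by positivity : 0 < ε / 3)
  set g := fun x => ∑ i ∈ Finset.range (k + 1), |fs i x|
  have hg : Integrable g μ := integrable_finsetSum _ fun i _ => (hint i).abs
  obtain ⟨δ, hδ, hsmall⟩ := hg.exists_pos_forall_setIntegral_abs_le (by positivity : 0 < ε / 3)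
  refine ⟨min δ (r / 2), by positivity, fun s hs hμs n => ?_⟩
  have hinit : ∀ j ≤ k, |∫ x in s, fs j x ∂μ| ≤ ε / 3 := fun j hj =>
    calc |∫ x in s, fs j x ∂μ| ≤ ∫ x in s, |fs j x| ∂μ := abs_integral_le_integral_abs
      _ ≤ ∫ x in s, |g x| ∂μ :=
        setIntegral_mono (hint j).abs.integrableOn hg.abs.integrableOn fun x =>
          (Finset.single_le_sum (f := fun i => |fs i x|) (fun i _ => abs_nonneg _)
            (Finset.mem_range_succ_iff.2 hj)).trans (le_abs_self _)
      _ ≤ ε / 3 := hsmall s hs (hμs.trans (ENNReal.ofReal_le_ofReal (min_le_left _ _)))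
  rcases le_total n k with hnk | hkn
  · linarith [hinit n hnk]
  have hμs : μ.real s < r := by
    have := ENNReal.toReal_le_of_le_ofReal (by positivity) hμs
    linarith [min_le_right δ (r / 2), measureReal_def μ s]
  have htail := abs_setIntegral_le_two_mul_of_forall_symmDiff_lt
    (f := fun x => fs n x - fs k x) ((hint n).sub (hint k)) hs₀
    (fun t ht htr => by
      rw [integral_sub (hint n).integrableOn (hint k).integrableOn]
      exact hnear t ht htr n hkn k le_rfl) hs hμs
  rw [integral_sub (hint n).integrableOn (hint k).integrableOn] at htail
  linarith [abs_sub_abs_le_abs_sub (∫ x in s, fs n x ∂μ) (∫ x in s, fs k x ∂μ), hinit k le_rfl]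

end MeasureTheory

/-- **Converse of Vitali's theorem.** On a finite measure space, if
`f_n ∈ L¹(μ)` and `lim_n ∫_E f_n dμ` exists for every measurable `E`, then `{f_n}` is
uniformly integrable: for every `ε > 0` there is `δ > 0` such that `μ E ≤ δ` implies
`∫_E |f_n| dμ ≤ ε` for all `n`. -/
theorem vitali_converse {X : Type*} [MeasurableSpace X] (μ : Measure X)
    [IsFiniteMeasure μ] (fs : ℕ → X → ℝ)
    (hint : ∀ n, Integrable (fs n) μ)
    (hlim : ∀ E : Set X, MeasurableSet E →
      ∃ L : ℝ, Tendsto (fun n => ∫ x in E, fs n x ∂μ) atTop (nhds L)) :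
    ∀ ε : ℝ, 0 < ε → ∃ δ : ℝ, 0 < δ ∧ ∀ E : Set X, MeasurableSet E →
      μ E ≤ ENNReal.ofReal δ → ∀ n, (∫ x in E, |fs n x| ∂μ) ≤ ε := by
  intro ε hε
  obtain ⟨δ, hδ, hsmall⟩ := exists_pos_forall_abs_setIntegral_le_of_cauchySeq hint
    (fun E hE => (hlim E hE).elim fun _ hL => hL.cauchySeq) (half_pos hε)
  refine ⟨δ, hδ, fun E hE hμE n => ?_⟩
  have := setIntegral_abs_le_two_mul_of_forall_subset (hint n) hE fun t htE ht =>
    hsmall t ht ((measure_mono htE).trans hμE) n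
  linarith
end
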